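/- arXiv:1805.05044 — 7 statements merged into one kernel-verified Lean document; each statement's English description precedes it below -/
import Mathlib

section
/- Let Q be a bounded positive integral operator with Q(1) > 0, φ(η) = ηQ/ηQ(1), Q^η = Q/(ηQ(1)), and define the first order operator ∂_ηφ(f) = Q^η[f − φ(η)(f)]. Then for any two probability measures η, ν: φ(ν) − φ(η) = ηQ^ν(1) · (ν − η)∂_ηφ, where ((ν−η)∂_ηφ)(f) := ∫ (ν−η)(dx) ∂_ηφ(f)(x). -/
open MeasureTheory

variable {S : Type*} [MeasurableSpace S]

/-- `Q(f)(x) = ∫ Q(x,dy) f(y)`. -/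
noncomputable def opQ (Q : S → Measure S) (f : S → ℝ) (x : S) : ℝ := ∫ y, f y ∂(Q x)

/-- `ηQ(f) = ∫ η(dx) Q(f)(x)`. -/
noncomputable def measQ (Q : S → Measure S) (η : Measure S) (f : S → ℝ) : ℝ :=
  ∫ x, opQ Q f x ∂η

/-- `φ(η)(f) = ηQ(f)/ηQ(1)`. -/
noncomputable def phiQ (Q : S → Measure S) (η : Measure S) (f : S → ℝ) : ℝ :=
  measQ Q η f / measQ Q η (fun _ => (1 : ℝ))

/-- The first order operator `∂_ηφ(f) = Q^η[f − φ(η)(f)]`, where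
`Q^η := Q/(ηQ(1))`. -/
noncomputable def dphiQ (Q : S → Measure S) (η : Measure S) (f : S → ℝ) (x : S) : ℝ :=
  (opQ Q f x - phiQ Q η f * opQ Q (fun _ => (1 : ℝ)) x) / measQ Q η (fun _ => (1 : ℝ))

/-- Normalized operator `Q̄(f) := Q(f)/Q(1)`. -/
noncomputable def nbarQ (Q : S → Measure S) (f : S → ℝ) (x : S) : ℝ :=
  opQ Q f x / opQ Q (fun _ => (1 : ℝ)) x

lemma dphi_integral (Q : S → Measure S) (η μ : Measure S) (f : S → ℝ)
    (hf : Integrable (opQ Q f) μ) (h1 : Integrable (opQ Q (fun _ => (1 : ℝ))) μ) :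
    ∫ x, dphiQ Q η f x ∂μ
      = (measQ Q μ f - phiQ Q η f * measQ Q μ (fun _ => (1 : ℝ)))
          / measQ Q η (fun _ => (1 : ℝ)) := by
  simp only [dphiQ, integral_div, measQ]
  rw [integral_sub hf (h1.const_mul _), MeasureTheory.integral_const_mul]

/-- First order decomposition:
`φ(ν) − φ(η) = ηQ^ν(1) · (ν − η)(∂_ηφ)`, where `ηQ^ν(1) = ηQ(1)/νQ(1)` and
`(ν−η)(∂_ηφ(f)) = ∫ ∂_ηφ(f) dν − ∫ ∂_ηφ(f) dη`. -/
theorem first_order_decomposition (Q : S → Measure S) (η ν : Measure S)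
    [IsProbabilityMeasure η] [IsProbabilityMeasure ν] (f : S → ℝ)
    (hη : 0 < measQ Q η (fun _ => (1 : ℝ))) (hν : 0 < measQ Q ν (fun _ => (1 : ℝ)))
    (hfη : Integrable (opQ Q f) η) (h1η : Integrable (opQ Q (fun _ => (1 : ℝ))) η)
    (hfν : Integrable (opQ Q f) ν) (h1ν : Integrable (opQ Q (fun _ => (1 : ℝ))) ν) :
    phiQ Q ν f - phiQ Q η f
      = (measQ Q η (fun _ => (1 : ℝ)) / measQ Q ν (fun _ => (1 : ℝ)))
        * ((∫ x, dphiQ Q η f x ∂ν) - ∫ x, dphiQ Q η f x ∂η) := by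
  rw [dphi_integral Q η ν f hfν h1ν, dphi_integral Q η η f hfη h1η]
  have ha := hη.ne'
  have hb := hν.ne'
  simp only [phiQ]
  field_simp
  ring
end

section
/- With Q, φ, Q^η, ∂_ηφ as above, for any bounded measurable f and any x ∈ S: ∂_ηφ(f)(x) = Q^η(1)(x) ∫ η(dy) Q^η(1)(y) (Q̄(f)(x) − Q̄(f)(y)), where Q̄(f) := Q(f)/Q(1). Consequently ‖∂_ηφ(f)‖ ≤ ‖Q^η(1)‖ · osc(Q̄(f)), where osc(g) = sup_{x,y} |g(x) − g(y)| and ‖·‖ is the uniform norm. -/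
open MeasureTheory

variable {S : Type*} [MeasurableSpace S]

/-- Pointwise representation of `∂_ηφ(f)` and the resulting sup-norm bound
`‖∂_ηφ(f)‖ ≤ ‖Q^η(1)‖ · osc(Q̄(f))`. -/
theorem dphi_pointwise_and_bound (Q : S → Measure S) (η : Measure S)
    [IsProbabilityMeasure η] (f : S → ℝ)
    (hQ1pos : ∀ x, 0 < opQ Q (fun _ => (1 : ℝ)) x)
    (hη : 0 < measQ Q η (fun _ => (1 : ℝ)))
    (hfη : Integrable (opQ Q f) η) (h1η : Integrable (opQ Q (fun _ => (1 : ℝ))) η)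
    (hint : ∀ x, Integrable
      (fun y => (opQ Q (fun _ => (1 : ℝ)) y / measQ Q η (fun _ => (1 : ℝ)))
        * (nbarQ Q f x - nbarQ Q f y)) η) :
    (∀ x, dphiQ Q η f x
        = (opQ Q (fun _ => (1 : ℝ)) x / measQ Q η (fun _ => (1 : ℝ)))
          * ∫ y, (opQ Q (fun _ => (1 : ℝ)) y / measQ Q η (fun _ => (1 : ℝ)))
              * (nbarQ Q f x - nbarQ Q f y) ∂η) ∧
      (∀ C o : ℝ,
        (∀ x, opQ Q (fun _ => (1 : ℝ)) x / measQ Q η (fun _ => (1 : ℝ)) ≤ C) →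
        (∀ x y, |nbarQ Q f x - nbarQ Q f y| ≤ o) →
        ∀ x, |dphiQ Q η f x| ≤ C * o) := by
  set m := measQ Q η (fun _ => (1 : ℝ)) with hm
  have hm0 : m ≠ 0 := hη.ne'
  have hQf : ∀ y, opQ Q (fun _ => (1 : ℝ)) y * nbarQ Q f y = opQ Q f y := by
    intro y
    unfold nbarQ
    rw [mul_div_assoc']
    exact mul_div_cancel_left₀ _ (hQ1pos y).ne'
  have hpt : ∀ x, dphiQ Q η f x
      = (opQ Q (fun _ => (1 : ℝ)) x / m)
        * ∫ y, (opQ Q (fun _ => (1 : ℝ)) y / m) * (nbarQ Q f x - nbarQ Q f y) ∂η := by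
    intro x
    have key : (fun y => (opQ Q (fun _ => (1 : ℝ)) y / m) * (nbarQ Q f x - nbarQ Q f y))
        = fun y => (nbarQ Q f x / m) * opQ Q (fun _ => (1 : ℝ)) y - (1 / m) * opQ Q f y := by
      funext y
      calc (opQ Q (fun _ => (1 : ℝ)) y / m) * (nbarQ Q f x - nbarQ Q f y)
          = (nbarQ Q f x / m) * opQ Q (fun _ => (1 : ℝ)) y
            - (1 / m) * (opQ Q (fun _ => (1 : ℝ)) y * nbarQ Q f y) := by ring
        _ = _ := by rw [hQf y]
    have hI : (∫ y, (opQ Q (fun _ => (1 : ℝ)) y / m) * (nbarQ Q f x - nbarQ Q f y) ∂η)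
        = (nbarQ Q f x / m) * m - (1 / m) * measQ Q η f := by
      rw [key, integral_sub (h1η.const_mul _) (hfη.const_mul _),
        integral_const_mul, integral_const_mul]
      rfl
    rw [hI, div_mul_cancel₀ _ hm0]
    unfold dphiQ phiQ
    rw [← hm, ← hQf x]
    ring
  refine ⟨hpt, ?_⟩
  intro C o hC ho x
  have ho0 : 0 ≤ o := by simpa using ho x x
  have hC0 : 0 ≤ C := le_trans (div_pos (hQ1pos x) hη).le (hC x)
  have hg0 : ∀ y, 0 ≤ opQ Q (fun _ => (1 : ℝ)) y / m := fun y =>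
    (div_pos (hQ1pos y) hη).le
  have hgint : Integrable (fun y => opQ Q (fun _ => (1 : ℝ)) y / m) η := h1η.div_const m
  have hI : |∫ y, (opQ Q (fun _ => (1 : ℝ)) y / m) * (nbarQ Q f x - nbarQ Q f y) ∂η| ≤ o := by
    calc |∫ y, (opQ Q (fun _ => (1 : ℝ)) y / m) * (nbarQ Q f x - nbarQ Q f y) ∂η|
        ≤ ∫ y, |(opQ Q (fun _ => (1 : ℝ)) y / m) * (nbarQ Q f x - nbarQ Q f y)| ∂η := by
          simpa only [Real.norm_eq_abs] using
            norm_integral_le_integral_norm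
              (fun y => (opQ Q (fun _ => (1 : ℝ)) y / m) * (nbarQ Q f x - nbarQ Q f y)) (μ := η)
      _ ≤ ∫ y, (opQ Q (fun _ => (1 : ℝ)) y / m) * o ∂η := by
          refine integral_mono (hint x).abs (hgint.mul_const o) ?_
          intro y
          dsimp only
          rw [abs_mul, abs_of_nonneg (hg0 y)]
          exact mul_le_mul_of_nonneg_left (ho x y) (hg0 y)
      _ = (∫ y, opQ Q (fun _ => (1 : ℝ)) y / m ∂η) * o := integral_mul_const _ _
      _ = (m / m) * o := by rw [integral_div]; rfl
      _ = o := by rw [div_self hm0, one_mul]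
  rw [hpt x, abs_mul, abs_of_nonneg (hg0 x)]
  exact mul_le_mul (hC x) hI (abs_nonneg _) hC0
end

section
/- With Q, φ as above, for any two probability measures η, ν and bounded measurable f: |(φ(ν) − φ(η))(f)| ≤ min(‖Q^ν(1)‖, ‖Q^η(1)‖) · osc(Q̄(f)). -/
open MeasureTheory

variable {S : Type*} [MeasurableSpace S]

/-- `|(φ(ν) − φ(η))(f)| ≤ min(‖Q^ν(1)‖, ‖Q^η(1)‖) · osc(Q̄(f))`. -/
theorem phi_contraction (Q : S → Measure S) (η ν : Measure S)
    [IsProbabilityMeasure η] [IsProbabilityMeasure ν] (f : S → ℝ) (Cν Cη o : ℝ)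
    (hQ1pos : ∀ x, 0 < opQ Q (fun _ => (1 : ℝ)) x)
    (hη : 0 < measQ Q η (fun _ => (1 : ℝ))) (hν : 0 < measQ Q ν (fun _ => (1 : ℝ)))
    (hfη : Integrable (opQ Q f) η) (h1η : Integrable (opQ Q (fun _ => (1 : ℝ))) η)
    (hfν : Integrable (opQ Q f) ν) (h1ν : Integrable (opQ Q (fun _ => (1 : ℝ))) ν)
    (hCν : ∀ x, opQ Q (fun _ => (1 : ℝ)) x / measQ Q ν (fun _ => (1 : ℝ)) ≤ Cν)
    (hCη : ∀ x, opQ Q (fun _ => (1 : ℝ)) x / measQ Q η (fun _ => (1 : ℝ)) ≤ Cη)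
    (ho : ∀ x y, |nbarQ Q f x - nbarQ Q f y| ≤ o) :
    |phiQ Q ν f - phiQ Q η f| ≤ min Cν Cη * o := by

  -- S is nonempty since hη would be false otherwise
  have hne : Nonempty S := by
    by_contra h
    rw [not_nonempty_iff] at h
    have : measQ Q η (fun _ => (1 : ℝ)) = 0 := by
      simp [measQ, MeasureTheory.integral_of_isEmpty]
    linarith
  obtain ⟨x₀⟩ := hne
  have ho0 : 0 ≤ o := by simpa using ho x₀ x₀
  -- 1 ≤ Cν and 1 ≤ Cη
  have hCν1 : 1 ≤ Cν := by
    have hpt : ∀ x, opQ Q (fun _ => (1 : ℝ)) x ≤ Cν * measQ Q ν (fun _ => (1 : ℝ)) :=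
      fun x => (div_le_iff₀ hν).mp (hCν x)
    have hint : measQ Q ν (fun _ => (1 : ℝ)) ≤ Cν * measQ Q ν (fun _ => (1 : ℝ)) := by
      calc measQ Q ν (fun _ => (1 : ℝ)) = ∫ x, opQ Q (fun _ => (1 : ℝ)) x ∂ν := rfl
        _ ≤ ∫ _x, Cν * measQ Q ν (fun _ => (1 : ℝ)) ∂ν :=
            integral_mono h1ν (integrable_const _) hpt
        _ = Cν * measQ Q ν (fun _ => (1 : ℝ)) := by simp
    nlinarith
  have hCη1 : 1 ≤ Cη := by
    have hpt : ∀ x, opQ Q (fun _ => (1 : ℝ)) x ≤ Cη * measQ Q η (fun _ => (1 : ℝ)) :=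
      fun x => (div_le_iff₀ hη).mp (hCη x)
    have hint : measQ Q η (fun _ => (1 : ℝ)) ≤ Cη * measQ Q η (fun _ => (1 : ℝ)) := by
      calc measQ Q η (fun _ => (1 : ℝ)) = ∫ x, opQ Q (fun _ => (1 : ℝ)) x ∂η := rfl
        _ ≤ ∫ _x, Cη * measQ Q η (fun _ => (1 : ℝ)) ∂η :=
            integral_mono h1η (integrable_const _) hpt
        _ = Cη * measQ Q η (fun _ => (1 : ℝ)) := by simp
    nlinarith
  set c := phiQ Q η f with hc
  have hfg : ∀ x, opQ Q f x = nbarQ Q f x * opQ Q (fun _ => (1 : ℝ)) x := by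
    intro x
    rw [nbarQ, div_mul_cancel₀ _ (hQ1pos x).ne']
  -- c is within o of every value of nbarQ
  have hcb : ∀ x, |nbarQ Q f x - c| ≤ o := by
    intro x
    have hub : measQ Q η f ≤ (nbarQ Q f x + o) * measQ Q η (fun _ => (1 : ℝ)) := by
      have hpt : ∀ y, opQ Q f y ≤ (nbarQ Q f x + o) * opQ Q (fun _ => (1 : ℝ)) y := by
        intro y
        rw [hfg y]
        have h1 := abs_le.mp (ho y x)
        exact mul_le_mul_of_nonneg_right (by linarith [h1.2]) (hQ1pos y).le
      calc measQ Q η f = ∫ y, opQ Q f y ∂η := rfl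
        _ ≤ ∫ y, (nbarQ Q f x + o) * opQ Q (fun _ => (1 : ℝ)) y ∂η :=
            integral_mono hfη (h1η.const_mul _) hpt
        _ = (nbarQ Q f x + o) * measQ Q η (fun _ => (1 : ℝ)) := integral_const_mul _ _
    have hlb : (nbarQ Q f x - o) * measQ Q η (fun _ => (1 : ℝ)) ≤ measQ Q η f := by
      have hpt : ∀ y, (nbarQ Q f x - o) * opQ Q (fun _ => (1 : ℝ)) y ≤ opQ Q f y := by
        intro y
        rw [hfg y]
        have h1 := abs_le.mp (ho y x)
        exact mul_le_mul_of_nonneg_right (by linarith [h1.1]) (hQ1pos y).le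
      calc (nbarQ Q f x - o) * measQ Q η (fun _ => (1 : ℝ))
          = ∫ y, (nbarQ Q f x - o) * opQ Q (fun _ => (1 : ℝ)) y ∂η := (integral_const_mul _ _).symm
        _ ≤ ∫ y, opQ Q f y ∂η := integral_mono (h1η.const_mul _) hfη hpt
        _ = measQ Q η f := rfl
    have h1 : c ≤ nbarQ Q f x + o := by
      rw [hc, phiQ, div_le_iff₀ hη]; exact hub
    have h2 : nbarQ Q f x - o ≤ c := by
      rw [hc, phiQ, le_div_iff₀ hη]; exact hlb
    rw [abs_le]; constructor <;> linarith
  have key : ∀ x, |opQ Q f x - c * opQ Q (fun _ => (1 : ℝ)) x| ≤ o * opQ Q (fun _ => (1 : ℝ)) x := by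
    intro x
    rw [hfg x, ← sub_mul, abs_mul, abs_of_pos (hQ1pos x)]
    exact mul_le_mul_of_nonneg_right (hcb x) (hQ1pos x).le
  have hdiff : phiQ Q ν f - c =
      (∫ x, (opQ Q f x - c * opQ Q (fun _ => (1 : ℝ)) x) ∂ν) / measQ Q ν (fun _ => (1 : ℝ)) := by
    rw [integral_sub hfν (h1ν.const_mul c), integral_const_mul]
    show phiQ Q ν f - c =
      (measQ Q ν f - c * measQ Q ν (fun _ => (1 : ℝ))) / measQ Q ν (fun _ => (1 : ℝ))
    rw [sub_div, mul_div_assoc, div_self hν.ne', mul_one, phiQ]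
  have habs : |phiQ Q ν f - c| ≤ o := by
    rw [hdiff, abs_div, abs_of_pos hν, div_le_iff₀ hν]
    calc |∫ x, (opQ Q f x - c * opQ Q (fun _ => (1 : ℝ)) x) ∂ν|
        ≤ ∫ x, |opQ Q f x - c * opQ Q (fun _ => (1 : ℝ)) x| ∂ν := by
          simpa [Real.norm_eq_abs] using
            norm_integral_le_integral_norm (fun x => opQ Q f x - c * opQ Q (fun _ => (1 : ℝ)) x)
      _ ≤ ∫ x, o * opQ Q (fun _ => (1 : ℝ)) x ∂ν :=
          integral_mono (hfν.sub (h1ν.const_mul c)).abs (h1ν.const_mul o) key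
      _ = o * measQ Q ν (fun _ => (1 : ℝ)) := integral_const_mul _ _
  calc |phiQ Q ν f - phiQ Q η f| = |phiQ Q ν f - c| := rfl
    _ ≤ o := habs
    _ = 1 * o := (one_mul o).symm
    _ ≤ min Cν Cη * o := mul_le_mul_of_nonneg_right (le_min hCν1 hCη1) ho0
end

section
/- With Q, φ, Q^η, ∂_ηφ as above, for any probability measures μ, η and bounded measurable f: ∂_ηφ(f) = μQ^η(1) · (∂_μφ(f) + Q^μ(1)·[φ(μ) − φ(η)](f)), as an identity of functions on S. -/
open MeasureTheory

variable {S : Type*} [MeasurableSpace S]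

/-- Change of reference measure:
`∂_ηφ(f) = μQ^η(1) · (∂_μφ(f) + Q^μ(1)·[φ(μ) − φ(η)](f))` pointwise,
where `μQ^η(1) = μQ(1)/ηQ(1)` and `Q^μ(1)(x) = Q(1)(x)/μQ(1)`. -/
theorem dphi_change_of_measure (Q : S → Measure S) (η μ : Measure S)
    [IsProbabilityMeasure η] [IsProbabilityMeasure μ] (f : S → ℝ)
    (hη : 0 < measQ Q η (fun _ => (1 : ℝ))) (hμ : 0 < measQ Q μ (fun _ => (1 : ℝ))) :
    ∀ x, dphiQ Q η f x
        = (measQ Q μ (fun _ => (1 : ℝ)) / measQ Q η (fun _ => (1 : ℝ)))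
          * (dphiQ Q μ f x
            + (opQ Q (fun _ => (1 : ℝ)) x / measQ Q μ (fun _ => (1 : ℝ)))
              * (phiQ Q μ f - phiQ Q η f)) := by
  intro x
  have ha := hη.ne'
  have hb := hμ.ne'
  simp only [dphiQ, phiQ]
  field_simp
  ring
end

section
/- Let X = (X^1,…,X^N) be N i.i.d. samples from a probability measure η, m(X) = (1/N)∑δ_{X^i} the empirical measure, and Q a bounded positive integral operator with Q(1) > 0 such that log(Q(1)(x)/Q(1)(y)) ≤ q for all x,y. Then for any bounded measurable f: N·|E[φ(m(X))(f)] − φ(η)(f)| ≤ e^q · osc(Q̄(f)), where φ(μ) = μQ/μQ(1) and Q̄(f) = Q(f)/Q(1). -/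
/-!
Write `h = Q(1)`, `g = Q(f)` and `c = φ(η)(f)`. Since `c` is an `h`-weighted average of
`Q̄(f) = g / h`, the centred function `u = g - c h` satisfies `∫ u dη = 0` and `|u| ≤ osc(Q̄ f) h`,
and the bias equals `E[∑ᵢ u(Xⁱ) / ∑ⱼ h(Xʲ)]`. In the `i`-th summand replace `1 / (T + h(Xⁱ))`,
where `T = ∑_{j ≠ i} h(Xʲ) ≈ (N - 1) h(Xⁱ)`, by its first order approximation `(N - 1) / (N T)`.
The approximation is independent of `Xⁱ`, so by `E[u(Xⁱ)] = 0` it contributes nothing, and since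
`h` varies by a factor at most `e^q` the error is at most `e^q osc(Q̄ f) / N` times the weight
`h(Xⁱ) / ∑ⱼ h(Xʲ)`. These weights sum to one.
-/

open MeasureTheory

variable {S : Type*} [MeasurableSpace S]

open ProbabilityTheory

lemma abs_sub_le_sub_one_mul {a b E : ℝ} (hb : 0 ≤ b)
    (hab : a ≤ E * b) (hba : b ≤ E * a) : |a - b| ≤ (E - 1) * a := by
  rw [abs_le]
  constructor <;> nlinarith

lemma abs_sum_sub_card_mul_le {ι : Type*} {s : Finset ι} {a : ι → ℝ} {b E : ℝ}
    (hb : 0 ≤ b) (hab : ∀ j ∈ s, a j ≤ E * b) (hba : ∀ j ∈ s, b ≤ E * a j) :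
    |∑ j ∈ s, a j - s.card * b| ≤ (E - 1) * ∑ j ∈ s, a j := by
  calc |∑ j ∈ s, a j - s.card * b| = |∑ j ∈ s, (a j - b)| := by
        rw [Finset.sum_sub_distrib, Finset.sum_const, nsmul_eq_mul]
    _ ≤ ∑ j ∈ s, |a j - b| := Finset.abs_sum_le_sum_abs _ _
    _ ≤ ∑ j ∈ s, (E - 1) * a j := Finset.sum_le_sum fun j hj =>
        abs_sub_le_sub_one_mul hb (hab j hj) (hba j hj)
    _ = (E - 1) * ∑ j ∈ s, a j := (Finset.mul_sum ..).symm

lemma abs_div_add_sub_mul_div_le {w y t o E k : ℝ} (hk : 0 ≤ k) (hy : 0 < y) (ht : 0 ≤ t)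
    (hE : 1 ≤ E) (hw : |w| ≤ o * y) (hty : |t - k * y| ≤ (E - 1) * t) :
    |w / (t + y) - w * (k / ((k + 1) * t))| ≤ E * o / (k + 1) * (y / (t + y)) := by
  have ho : 0 ≤ o := nonneg_of_mul_nonneg_left ((abs_nonneg w).trans hw) hy
  rcases ht.eq_or_lt with rfl | ht
  -- `t = 0` forces `k = 0` (a single sample); the subtracted term is then `0` since `x / 0 = 0`.
  · have hk0 : k = 0 := by
      have : |k * y| ≤ 0 := by simpa using hty
      exact (mul_eq_zero.1 (abs_nonpos_iff.1 this)).resolve_right hy.ne'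
    subst hk0
    simp only [zero_add, div_self hy.ne', zero_div, mul_zero, sub_zero, div_one, mul_one]
    rw [abs_div, abs_of_pos hy, div_le_iff₀ hy]
    nlinarith [mul_le_mul_of_nonneg_right hE (mul_nonneg ho hy.le)]
  have key : w / (t + y) - w * (k / ((k + 1) * t))
      = w * (t - k * y) / ((k + 1) * t * (t + y)) := by
    field_simp
    ring
  have hden : 0 < (k + 1) * t * (t + y) := by positivity
  rw [key, abs_div, abs_mul, abs_of_pos hden, div_le_iff₀ hden]
  calc |w| * |t - k * y| ≤ (o * y) * ((E - 1) * t) :=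
        mul_le_mul hw hty (abs_nonneg _) (by positivity)
    _ ≤ (o * y) * (E * t) := by gcongr; linarith
    _ = E * o / (k + 1) * (y / (t + y)) * ((k + 1) * t * (t + y)) := by
        field_simp

lemma abs_div_sum_sub_mul_div_sum_erase_le {ι : Type*} [Fintype ι] [DecidableEq ι]
    {a : ι → ℝ} {w E o : ℝ} (ha : ∀ j, 0 < a j) (hE : ∀ j l, a j ≤ E * a l) (i : ι)
    (hw : |w| ≤ o * a i) :
    |w / ∑ j, a j - w * ((Finset.univ.erase i).card
        / (((Finset.univ.erase i).card + 1) * ∑ j ∈ Finset.univ.erase i, a j))|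
      ≤ E * o / Fintype.card ι * (a i / ∑ j, a j) := by
  have hE1 : 1 ≤ E := by nlinarith [hE i i, ha i]
  have hk : ((Finset.univ.erase i).card + 1 : ℝ) = Fintype.card ι := by
    exact_mod_cast Finset.card_erase_add_one (Finset.mem_univ i)
  rw [← Finset.sum_erase_add _ _ (Finset.mem_univ i), ← hk]
  exact abs_div_add_sub_mul_div_le (Nat.cast_nonneg _) (ha i)
    (Finset.sum_nonneg fun j _ => (ha j).le) hE1 hw
    (abs_sum_sub_card_mul_le (ha i).le (fun j _ => hE _ _) fun j _ => hE _ _)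

lemma abs_sub_integral_div_integral_mul_le {μ : Measure S}
    {g h : S → ℝ} {o : ℝ} (hpos : ∀ x, 0 < h x) (hμ : 0 < ∫ y, h y ∂μ)
    (hg : Integrable g μ) (hh : Integrable h μ)
    (hosc : ∀ x y, |g x / h x - g y / h y| ≤ o) (x : S) :
    |g x - (∫ y, g y ∂μ) / (∫ y, h y ∂μ) * h x| ≤ o * h x := by
  set F := g x / h x
  have hdev : |F * ∫ y, h y ∂μ - ∫ y, g y ∂μ| ≤ o * ∫ y, h y ∂μ := by
    have hint : F * ∫ y, h y ∂μ - ∫ y, g y ∂μ = ∫ y, h y * (F - g y / h y) ∂μ := by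
      rw [← integral_const_mul, ← integral_sub (hh.const_mul F) hg]
      refine integral_congr_ae (.of_forall fun y => ?_)
      field_simp [(hpos y).ne']
    calc |F * ∫ y, h y ∂μ - ∫ y, g y ∂μ| = |∫ y, h y * (F - g y / h y) ∂μ| := by rw [hint]
      _ ≤ ∫ y, |h y * (F - g y / h y)| ∂μ := abs_integral_le_integral_abs
      _ ≤ ∫ y, o * h y ∂μ := by
          refine integral_mono_of_nonneg (.of_forall fun _ => abs_nonneg _) (hh.const_mul o)
            (.of_forall fun y => ?_)
          dsimp only
          rw [abs_mul, abs_of_pos (hpos y), mul_comm o]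
          exact mul_le_mul_of_nonneg_left (hosc x y) (hpos y).le
      _ = o * ∫ y, h y ∂μ := integral_const_mul o _
  have hF : |F - (∫ y, g y ∂μ) / (∫ y, h y ∂μ)| ≤ o := by
    rw [← mul_le_mul_iff_of_pos_right hμ, ← abs_of_pos hμ, ← abs_mul, abs_of_pos hμ,
      sub_mul, div_mul_cancel₀ _ hμ.ne']
    exact hdev
  calc |g x - (∫ y, g y ∂μ) / (∫ y, h y ∂μ) * h x|
      = h x * |F - (∫ y, g y ∂μ) / (∫ y, h y ∂μ)| := by
        rw [← abs_of_pos (hpos x), ← abs_mul, abs_of_pos (hpos x), mul_sub,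
          mul_div_cancel₀ _ (hpos x).ne', mul_comm (h x)]
    _ ≤ o * h x := by rw [mul_comm o]; exact mul_le_mul_of_nonneg_left hF (hpos x).le

lemma integral_sub_integral_div_integral_mul_eq_zero {μ : Measure S} {g h : S → ℝ}
    (hg : Integrable g μ) (hh : Integrable h μ) (hμ : ∫ y, h y ∂μ ≠ 0) :
    ∫ x, (g x - (∫ y, g y ∂μ) / (∫ y, h y ∂μ) * h x) ∂μ = 0 := by
  rw [integral_sub hg (hh.const_mul _), integral_const_mul, div_mul_cancel₀ _ hμ, sub_self]

section Sampling

variable {Ω ι : Type*} [MeasurableSpace Ω] {P : Measure Ω}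

lemma integrable_div_sum_of_abs_le [Fintype ι] [IsFiniteMeasure P] {Y : ι → Ω → ℝ}
    {W : Ω → ℝ} {o : ℝ} (hYm : ∀ j, AEStronglyMeasurable (Y j) P)
    (hWm : AEStronglyMeasurable W P) (hY : ∀ j ω, 0 < Y j ω) (i : ι)
    (hW : ∀ ω, |W ω| ≤ o * Y i ω) :
    Integrable (fun ω => W ω / ∑ j, Y j ω) P := by
  refine .of_bound (hWm.div₀ (Finset.aestronglyMeasurable_fun_sum _ fun j _ => hYm j)) |o|
    (.of_forall fun ω => ?_)
  have hS : 0 < ∑ j, Y j ω := Finset.sum_pos (fun j _ => hY j ω) ⟨i, Finset.mem_univ i⟩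
  have hYS : Y i ω ≤ ∑ j, Y j ω :=
    Finset.single_le_sum (f := fun j => Y j ω) (fun j _ => (hY j ω).le) (Finset.mem_univ i)
  rw [norm_div, Real.norm_eq_abs, Real.norm_eq_abs, abs_of_pos hS, div_le_iff₀ hS]
  calc |W ω| ≤ o * Y i ω := hW ω
    _ ≤ |o| * Y i ω := mul_le_mul_of_nonneg_right (le_abs_self o) (hY i ω).le
    _ ≤ |o| * ∑ j, Y j ω := mul_le_mul_of_nonneg_left hYS (abs_nonneg o)

lemma integral_sum_div_sum_sub_const [Fintype ι] [Nonempty ι] [IsProbabilityMeasure P]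
    {g h : ι → Ω → ℝ} (hh : ∀ i ω, 0 < h i ω)
    (hint : Integrable (fun ω => (∑ i, g i ω) / ∑ i, h i ω) P) (c : ℝ) :
    (∫ ω, (∑ i, g i ω) / ∑ i, h i ω ∂P) - c
      = ∫ ω, (∑ i, (g i ω - c * h i ω)) / ∑ i, h i ω ∂P := by
  calc (∫ ω, (∑ i, g i ω) / ∑ i, h i ω ∂P) - c
      = ∫ ω, ((∑ i, g i ω) / ∑ i, h i ω - c) ∂P := by
        rw [integral_sub hint (integrable_const c), integral_const, probReal_univ, one_smul]
    _ = _ := integral_congr_ae (.of_forall fun ω => by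
        rw [Finset.sum_sub_distrib, ← Finset.mul_sum, sub_div, mul_div_cancel_right₀ _
          (Finset.sum_pos (fun i _ => hh i ω) Finset.univ_nonempty).ne'])

variable {X : ι → Ω → S}

lemma integral_comp_mul_eq_zero_of_iIndepFun (hX : iIndepFun X P)
    (hXm : ∀ i, Measurable (X i)) {i : ι} {s : Finset ι} (hi : i ∉ s) {u : S → ℝ}
    (hu : AEStronglyMeasurable u (P.map (X i))) (hu0 : ∫ x, u x ∂(P.map (X i)) = 0)
    {v : (s → S) → ℝ} (hv : AEStronglyMeasurable v (P.map fun ω (j : s) => X j ω)) :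
    ∫ ω, u (X i ω) * v (fun j => X j ω) ∂P = 0 := by
  have hindep : IndepFun (X i) (fun ω (j : s) => X j ω) P := by
    exact (hX.indepFun_finset {i} s (Finset.disjoint_singleton_left.2 hi) hXm).comp
      (measurable_pi_apply ⟨i, Finset.mem_singleton_self i⟩) measurable_id
  have := hindep.integral_comp_mul_comp (hXm i).aemeasurable
    (measurable_pi_lambda _ fun (j : s) => hXm j).aemeasurable hu hv
  simp only [Pi.mul_apply, Function.comp_apply] at this
  rw [this, ← integral_map (hXm i).aemeasurable hu, hu0, zero_mul]

lemma aestronglyMeasurable_sum_comp_apply_map (hXm : ∀ i, Measurable (X i)) {s : Finset ι}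
    {h : S → ℝ} (hh : ∀ j ∈ s, AEStronglyMeasurable h (P.map (X j))) :
    AEStronglyMeasurable (fun x : s → S => ∑ j, h (x j)) (P.map fun ω (j : s) => X j ω) := by
  refine Finset.aestronglyMeasurable_fun_sum _ fun j _ => ?_
  have hmap : (P.map fun ω (j : s) => X j ω).map (fun x => x j) = P.map (X j) := by
    rw [Measure.map_map (measurable_pi_apply j) (measurable_pi_lambda _ fun (j : s) => hXm j)]
    rfl
  exact (hmap ▸ hh j j.2).comp_aemeasurable (measurable_pi_apply j).aemeasurable

variable [Fintype ι] {h u : S → ℝ} {E o : ℝ}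

lemma abs_integral_div_sum_le (hX : iIndepFun X P) (hXm : ∀ i, Measurable (X i))
    (hh : ∀ i, AEStronglyMeasurable h (P.map (X i)))
    (hu : ∀ i, AEStronglyMeasurable u (P.map (X i)))
    (hpos : ∀ x, 0 < h x) (hE : ∀ x y, h x ≤ E * h y) (hu_le : ∀ x, |u x| ≤ o * h x)
    (hu0 : ∀ i, ∫ x, u x ∂(P.map (X i)) = 0) (i : ι) :
    |∫ ω, u (X i ω) / ∑ j, h (X j ω) ∂P|
      ≤ E * o / Fintype.card ι * ∫ ω, h (X i ω) / ∑ j, h (X j ω) ∂P := by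
  classical
  have := hX.isProbabilityMeasure
  set s : Finset ι := Finset.univ.erase i
  -- first order approximation of `1 / ∑ j, h (X j ω)`, a function of the other samples only
  set v : (s → S) → ℝ := fun x => s.card / ((s.card + 1) * ∑ j, h (x j))
  have hpt : ∀ ω, |u (X i ω) / ∑ j, h (X j ω) - u (X i ω) * v (fun j => X j ω)|
      ≤ E * o / Fintype.card ι * (h (X i ω) / ∑ j, h (X j ω)) := fun ω => by
    simp only [v, Finset.sum_coe_sort s fun j => h (X j ω)]
    exact abs_div_sum_sub_mul_div_sum_erase_le (fun j => hpos _) (fun j l => hE _ _) i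
      (hu_le _)
  have hYm : ∀ j, AEStronglyMeasurable (fun ω => h (X j ω)) P :=
    fun j => (hh j).comp_aemeasurable (hXm j).aemeasurable
  have hWm : AEStronglyMeasurable (fun ω => u (X i ω)) P :=
    (hu i).comp_aemeasurable (hXm i).aemeasurable
  have hvm : AEStronglyMeasurable v (P.map fun ω (j : s) => X j ω) :=
    aestronglyMeasurable_const.div₀ (aestronglyMeasurable_const.mul
      (aestronglyMeasurable_sum_comp_apply_map hXm fun j _ => hh j))
  have hVm : AEStronglyMeasurable (fun ω => v (fun j => X j ω)) P :=
    hvm.comp_aemeasurable (measurable_pi_lambda _ fun (j : s) => hXm j).aemeasurable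
  have hYS := integrable_div_sum_of_abs_le hYm (hYm i) (fun j ω => hpos _) i
    (o := 1) fun ω => by rw [one_mul, abs_of_pos (hpos _)]
  have hWS := integrable_div_sum_of_abs_le hYm hWm (fun j ω => hpos _) i fun ω => hu_le _
  have hD : Integrable
      (fun ω => u (X i ω) / ∑ j, h (X j ω) - u (X i ω) * v (fun j => X j ω)) P :=
    (hYS.const_mul _).mono' (hWS.1.sub (hWm.mul hVm)) (.of_forall hpt)
  have hWV : Integrable (fun ω => u (X i ω) * v (fun j => X j ω)) P :=
    (hWS.sub hD).congr (.of_forall fun ω => sub_sub_cancel _ _)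
  have hWV0 : ∫ ω, u (X i ω) * v (fun j => X j ω) ∂P = 0 :=
    integral_comp_mul_eq_zero_of_iIndepFun hX hXm (Finset.notMem_erase i _) (hu i) (hu0 i) hvm
  calc |∫ ω, u (X i ω) / ∑ j, h (X j ω) ∂P|
      = |∫ ω, (u (X i ω) / ∑ j, h (X j ω) - u (X i ω) * v (fun j => X j ω)) ∂P| := by
        rw [integral_sub hWS hWV, hWV0, sub_zero]
    _ ≤ ∫ ω, |u (X i ω) / ∑ j, h (X j ω) - u (X i ω) * v (fun j => X j ω)| ∂P :=
        abs_integral_le_integral_abs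
    _ ≤ ∫ ω, E * o / Fintype.card ι * (h (X i ω) / ∑ j, h (X j ω)) ∂P :=
        integral_mono_of_nonneg (.of_forall fun _ => abs_nonneg _) (hYS.const_mul _)
          (.of_forall hpt)
    _ = E * o / Fintype.card ι * ∫ ω, h (X i ω) / ∑ j, h (X j ω) ∂P :=
        integral_const_mul _ _

theorem abs_integral_sum_div_sum_le [Nonempty ι] (hX : iIndepFun X P)
    (hXm : ∀ i, Measurable (X i))
    (hh : ∀ i, AEStronglyMeasurable h (P.map (X i)))
    (hu : ∀ i, AEStronglyMeasurable u (P.map (X i)))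
    (hpos : ∀ x, 0 < h x) (hE : ∀ x y, h x ≤ E * h y) (hu_le : ∀ x, |u x| ≤ o * h x)
    (hu0 : ∀ i, ∫ x, u x ∂(P.map (X i)) = 0) :
    |∫ ω, (∑ i, u (X i ω)) / ∑ j, h (X j ω) ∂P| ≤ E * o / Fintype.card ι := by
  have := hX.isProbabilityMeasure
  have hYm : ∀ j, AEStronglyMeasurable (fun ω => h (X j ω)) P :=
    fun j => (hh j).comp_aemeasurable (hXm j).aemeasurable
  have hYS : ∀ i, Integrable (fun ω => h (X i ω) / ∑ j, h (X j ω)) P := fun i =>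
    integrable_div_sum_of_abs_le hYm (hYm i) (fun j ω => hpos _) i
      (o := 1) fun ω => by rw [one_mul, abs_of_pos (hpos _)]
  have hWS : ∀ i, Integrable (fun ω => u (X i ω) / ∑ j, h (X j ω)) P := fun i =>
    integrable_div_sum_of_abs_le hYm ((hu i).comp_aemeasurable (hXm i).aemeasurable)
      (fun j ω => hpos _) i fun ω => hu_le _
  have hweights : ∑ i, ∫ ω, h (X i ω) / ∑ j, h (X j ω) ∂P = 1 := by
    rw [← integral_finsetSum _ fun i _ => hYS i]
    simp_rw [← Finset.sum_div]
    rw [integral_congr_ae (.of_forall fun ω =>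
      div_self (Finset.sum_pos (fun j _ => hpos (X j ω)) Finset.univ_nonempty).ne'),
      integral_const, probReal_univ, one_smul]
  simp_rw [Finset.sum_div]
  rw [integral_finsetSum _ fun i _ => hWS i]
  calc |∑ i, ∫ ω, u (X i ω) / ∑ j, h (X j ω) ∂P|
      ≤ ∑ i, |∫ ω, u (X i ω) / ∑ j, h (X j ω) ∂P| := Finset.abs_sum_le_sum_abs _ _
    _ ≤ ∑ i, E * o / Fintype.card ι * ∫ ω, h (X i ω) / ∑ j, h (X j ω) ∂P :=
        Finset.sum_le_sum fun i _ => abs_integral_div_sum_le hX hXm hh hu hpos hE hu_le hu0 i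
    _ = E * o / Fintype.card ι := by rw [← Finset.mul_sum, hweights, mul_one]

end Sampling

theorem empirical_bias_estimate_general
    {Ω : Type*} [MeasurableSpace Ω] (P : Measure Ω) [IsProbabilityMeasure P]
    (Q : S → Measure S) (η : Measure S)
    (N : ℕ) (hN : 1 ≤ N) (X : Fin N → Ω → S)
    (hXmeas : ∀ i, Measurable (X i))
    (hindep : iIndepFun X P)
    (hlaw : ∀ i, Measure.map (X i) P = η)
    (f : S → ℝ) (q o : ℝ)
    (hQ1pos : ∀ x, 0 < opQ Q (fun _ => (1 : ℝ)) x)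
    (hη : 0 < measQ Q η (fun _ => (1 : ℝ)))
    (hfη : Integrable (opQ Q f) η) (h1η : Integrable (opQ Q (fun _ => (1 : ℝ))) η)
    (hq : ∀ x y, Real.log (opQ Q (fun _ => (1 : ℝ)) x / opQ Q (fun _ => (1 : ℝ)) y) ≤ q)
    (ho : ∀ x y, |nbarQ Q f x - nbarQ Q f y| ≤ o)
    (hIexp : Integrable (fun ω =>
      (∑ i, opQ Q f (X i ω)) / (∑ i, opQ Q (fun _ => (1 : ℝ)) (X i ω))) P) :
    (N : ℝ) * |(∫ ω, (∑ i, opQ Q f (X i ω)) / (∑ i, opQ Q (fun _ => (1 : ℝ)) (X i ω)) ∂P)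
        - phiQ Q η f| ≤ Real.exp q * o := by
  have : NeZero N := ⟨by omega⟩
  set h := opQ Q (fun _ => (1 : ℝ))
  set c := phiQ Q η f
  have hE : ∀ x y, h x ≤ Real.exp q * h y := fun x y => by
    have := (Real.log_le_iff_le_exp (div_pos (hQ1pos x) (hQ1pos y))).1 (hq x y)
    rwa [div_le_iff₀ (hQ1pos y)] at this
  have hu_le : ∀ x, |opQ Q f x - c * h x| ≤ o * h x :=
    abs_sub_integral_div_integral_mul_le hQ1pos hη hfη h1η ho
  have hu : Integrable (fun x => opQ Q f x - c * h x) η := hfη.sub (h1η.const_mul c)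
  have hu0 : ∫ x, (opQ Q f x - c * h x) ∂η = 0 :=
    integral_sub_integral_div_integral_mul_eq_zero hfη h1η hη.ne'
  have hbound := abs_integral_sum_div_sum_le hindep hXmeas (fun i => hlaw i ▸ h1η.1)
    (fun i => hlaw i ▸ hu.1) hQ1pos hE hu_le (fun i => hlaw i ▸ hu0)
  rw [integral_sum_div_sum_sub_const (fun i ω => hQ1pos (X i ω)) hIexp]
  rw [Fintype.card_fin] at hbound
  calc (N : ℝ) * _ ≤ N * (Real.exp q * o / N) := by gcongr
    _ = Real.exp q * o := by field_simp

/-- Bias estimate for the empirical measure transformation: if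
`log(Q(1)(x)/Q(1)(y)) ≤ q` for all `x, y`, then for `N` i.i.d. samples
`X = (X^1,…,X^N)` from `η`,
`N·|E[φ(m(X))(f)] − φ(η)(f)| ≤ e^q · osc(Q̄(f))`.  Here
`φ(m(X))(f) = (∑_i Q(f)(X^i)) / (∑_i Q(1)(X^i))`. -/
theorem empirical_bias_estimate
    {Ω : Type*} [MeasurableSpace Ω] (P : Measure Ω) [IsProbabilityMeasure P]
    (Q : S → Measure S) (η : Measure S) [IsProbabilityMeasure η]
    (N : ℕ) (hN : 1 ≤ N) (X : Fin N → Ω → S)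
    (hXmeas : ∀ i, Measurable (X i))
    (hindep : iIndepFun X P)
    (hlaw : ∀ i, Measure.map (X i) P = η)
    (f : S → ℝ) (q o : ℝ)
    (hQ1pos : ∀ x, 0 < opQ Q (fun _ => (1 : ℝ)) x)
    (hη : 0 < measQ Q η (fun _ => (1 : ℝ)))
    (hfη : Integrable (opQ Q f) η) (h1η : Integrable (opQ Q (fun _ => (1 : ℝ))) η)
    (hq : ∀ x y, Real.log (opQ Q (fun _ => (1 : ℝ)) x / opQ Q (fun _ => (1 : ℝ)) y) ≤ q)
    (ho : ∀ x y, |nbarQ Q f x - nbarQ Q f y| ≤ o)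
    (hIexp : Integrable (fun ω =>
      (∑ i, opQ Q f (X i ω)) / (∑ i, opQ Q (fun _ => (1 : ℝ)) (X i ω))) P) :
    (N : ℝ) * |(∫ ω, (∑ i, opQ Q f (X i ω)) / (∑ i, opQ Q (fun _ => (1 : ℝ)) (X i ω)) ∂P)
        - phiQ Q η f| ≤ Real.exp q * o :=
  empirical_bias_estimate_general P Q η N hN X hXmeas hindep hlaw f q o hQ1pos hη hfη h1η hq ho
    hIexp
end

section
/- Doob h-transform cross carré du champ identity: with Q a bounded positive kernel, φ(η) = ηQ/ηQ(1), Q^η = Q/ηQ(1), ∂_ηφ(f) = Q^η[f − φ(η)(f)], and L a generator with carré du champ Γ_L, for any probability measures μ, η and f in the domain: (ηQ^μ(1))² Γ_L(Q^η(1), ∂_ηφ(f)) = Γ_L(Q^μ(1), ∂_μφ(f)) + [φ(μ) − φ(η)](f) · Γ_L(Q^μ(1), Q^μ(1)). -/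
open MeasureTheory

variable {S : Type*} [MeasurableSpace S]

/-- The carré du champ operator `Γ_L(f,g) := L(fg) − fL(g) − gL(f)`. -/
def carre (L : (S → ℝ) → (S → ℝ)) (f g : S → ℝ) : S → ℝ :=
  fun x => L (f * g) x - f x * L g x - g x * L f x

/-- Linearity helper: `L` applied to a linear combination. -/
lemma L_combo {L : (S → ℝ) → (S → ℝ)} (hL : IsLinearMap ℝ L) (c d : ℝ)
    (u v : S → ℝ) (x : S) :
    L (fun z => c * u z + d * v z) x = c * L u x + d * L v x := by
  have h : (fun z => c * u z + d * v z) = c • u + d • v := rfl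
  rw [h, hL.map_add, hL.map_smul, hL.map_smul]
  simp [smul_eq_mul]

/-- Doob h-transform cross carré du champ identity:
`(ηQ^μ(1))² Γ_L(Q^η(1), ∂_ηφ(f)) = Γ_L(Q^μ(1), ∂_μφ(f))
    + [φ(μ) − φ(η)](f) · Γ_L(Q^μ(1), Q^μ(1))` pointwise, where
`ηQ^μ(1) = ηQ(1)/μQ(1)` and `Q^η(1)(x) = Q(1)(x)/ηQ(1)`. -/
theorem carre_h_transform (Q : S → Measure S) (L : (S → ℝ) → (S → ℝ))
    (hL : IsLinearMap ℝ L) (η μ : Measure S)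
    [IsProbabilityMeasure η] [IsProbabilityMeasure μ] (f : S → ℝ)
    (hη : 0 < measQ Q η (fun _ => (1 : ℝ))) (hμ : 0 < measQ Q μ (fun _ => (1 : ℝ))) :
    ∀ x,
      (measQ Q η (fun _ => (1 : ℝ)) / measQ Q μ (fun _ => (1 : ℝ))) ^ 2
          * carre L (fun z => opQ Q (fun _ => (1 : ℝ)) z / measQ Q η (fun _ => (1 : ℝ)))
              (dphiQ Q η f) x
        = carre L (fun z => opQ Q (fun _ => (1 : ℝ)) z / measQ Q μ (fun _ => (1 : ℝ)))
            (dphiQ Q μ f) x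
          + (phiQ Q μ f - phiQ Q η f)
            * carre L (fun z => opQ Q (fun _ => (1 : ℝ)) z / measQ Q μ (fun _ => (1 : ℝ)))
                (fun z => opQ Q (fun _ => (1 : ℝ)) z / measQ Q μ (fun _ => (1 : ℝ))) x := by
  intro x
  set a := measQ Q η (fun _ => (1 : ℝ)) with ha_def
  set b := measQ Q μ (fun _ => (1 : ℝ)) with hb_def
  have ha : a ≠ 0 := ne_of_gt hη
  have hb : b ≠ 0 := ne_of_gt hμ
  set q1 : S → ℝ := opQ Q (fun _ => (1 : ℝ)) with hq1
  set qf : S → ℝ := opQ Q f with hqf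
  set cη := phiQ Q η f with hcη
  set cμ := phiQ Q μ f with hcμ
  -- rewrite all the functions fed to L as explicit linear combinations
  have e1 : (fun z => q1 z / a) * dphiQ Q η f
      = fun z => (1 / (a * a)) * (q1 z * qf z) + (-(cη / (a * a))) * (q1 z * q1 z) := by
    funext z
    simp only [Pi.mul_apply, dphiQ, ← hq1, ← hqf, ← ha_def, ← hcη]
    ring
  have e2 : (fun z => q1 z / b) * dphiQ Q μ f
      = fun z => (1 / (b * b)) * (q1 z * qf z) + (-(cμ / (b * b))) * (q1 z * q1 z) := by
    funext z
    simp only [Pi.mul_apply, dphiQ, ← hq1, ← hqf, ← hb_def, ← hcμ]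
    ring
  have e3 : (fun z => q1 z / b) * (fun z => q1 z / b)
      = fun z => (0 : ℝ) * (q1 z * qf z) + (1 / (b * b)) * (q1 z * q1 z) := by
    funext z
    simp only [Pi.mul_apply]
    ring
  have e4 : dphiQ Q η f = fun z => (1 / a) * qf z + (-(cη / a)) * q1 z := by
    funext z
    simp only [dphiQ, ← hq1, ← hqf, ← ha_def, ← hcη]
    ring
  have e5 : dphiQ Q μ f = fun z => (1 / b) * qf z + (-(cμ / b)) * q1 z := by
    funext z
    simp only [dphiQ, ← hq1, ← hqf, ← hb_def, ← hcμ]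
    ring
  have e6 : (fun z => q1 z / a) = fun z => (1 / a) * q1 z + (0 : ℝ) * q1 z := by
    funext z; ring
  have e7 : (fun z => q1 z / b) = fun z => (1 / b) * q1 z + (0 : ℝ) * q1 z := by
    funext z; ring
  simp only [carre, e1, e2, e3]
  rw [e4, e5]
  nth_rewrite 1 [e6]
  rw [e7]
  simp only [L_combo hL]
  field_simp
  ring
end

section
/- Taylor expansion with remainder for the normalized transformation: with Q, φ, Q^η, ∂_ηφ as above and defining ∂^k_ηφ(f) := (−1)^{k−1} k! [Q^η(1)^{⊗(k−1)} ⊗ ∂_ηφ(f)], for any probability measures ν, η and n ≥ 1: φ(ν) = φ(η) + ∑_{k=1}^n (1/k!)(ν−η)^{⊗k}∂^k_ηφ + (1/(n+1)!)(ν−η)^{⊗(n+1)} [ηQ^ν(1)·∂^{n+1}_ηφ], where (ν−η)^{⊗k} G denotes integration of the k-fold tensor product of the signed measure (ν−η) against the tensor-product integrand G. -/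
/-!
Writing `x = νQ^η(1) = νQ(1)/ηQ(1)`, the first-order identity
`φ(ν) − φ(η) = x⁻¹ · ν(∂_ηφ f)` holds exactly, and `η(∂_ηφ f) = 0`, `η(Q^η 1) = 1`.
Expanding `x⁻¹ = ∑_{k<n} (1 − x)^k + (1 − x)^n / x` with `1 − x = −(ν − η)(Q^η 1)` gives the
Taylor terms, the last summand being the remainder with its factor `x⁻¹ = ηQ^ν(1)`.
-/

open MeasureTheory

variable {S : Type*} [MeasurableSpace S]

open Finset

section Scalar

variable {K : Type*} [Field K]

theorem inv_eq_sum_range_one_sub_pow_add {x : K} (hx : x ≠ 0) (n : ℕ) :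
    x⁻¹ = ∑ k ∈ range n, (1 - x) ^ k + (1 - x) ^ n / x := by
  have h := mul_neg_geom_sum (1 - x) n
  rw [sub_sub_cancel] at h
  apply mul_left_cancel₀ hx
  rw [mul_add, mul_inv_cancel₀ hx, mul_div_cancel₀ _ hx, h, sub_add_cancel]

variable [CharZero K]

theorem sum_Icc_factorial_taylor_term (a b : K) (n : ℕ) :
    ∑ k ∈ Icc 1 n, 1 / (k.factorial : K) * ((-1) ^ (k - 1) * k.factorial * a ^ (k - 1) * b)
      = ∑ k ∈ range n, (-a) ^ k * b := by
  rw [← Ico_add_one_right_eq_Icc, sum_Ico_eq_sum_range]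
  refine sum_congr rfl fun k _ => ?_
  have hfac : ((1 + k).factorial : K) ≠ 0 := Nat.cast_ne_zero.2 (Nat.factorial_ne_zero _)
  rw [Nat.add_sub_cancel_left, neg_pow]
  field_simp
  ring

theorem inv_one_add_mul_eq_taylor {a : K} (ha : 1 + a ≠ 0) (b : K) (n : ℕ) :
    (1 + a)⁻¹ * b
      = ∑ k ∈ Icc 1 n, 1 / (k.factorial : K) * ((-1) ^ (k - 1) * k.factorial * a ^ (k - 1) * b)
        + 1 / ((n + 1).factorial : K) * ((1 + a)⁻¹ * ((-1) ^ n * (n + 1).factorial * a ^ n * b)) := by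
  have hfac : ((n + 1).factorial : K) ≠ 0 := Nat.cast_ne_zero.2 (Nat.factorial_ne_zero _)
  rw [sum_Icc_factorial_taylor_term, ← sum_mul]
  conv_lhs => rw [inv_eq_sum_range_one_sub_pow_add ha n, sub_add_cancel_left, neg_pow]
  field_simp

end Scalar

variable {Q : S → Measure S} {η μ : Measure S} {f : S → ℝ}

theorem integral_opQ_one_div (c : ℝ) :
    ∫ x, opQ Q (fun _ => (1 : ℝ)) x / c ∂μ = measQ Q μ (fun _ => (1 : ℝ)) / c :=
  integral_div _ _

theorem integral_dphiQ (hf : Integrable (opQ Q f) μ)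
    (h1 : Integrable (opQ Q (fun _ => (1 : ℝ))) μ) :
    ∫ x, dphiQ Q η f x ∂μ
      = (measQ Q μ f - phiQ Q η f * measQ Q μ (fun _ => (1 : ℝ))) / measQ Q η (fun _ => (1 : ℝ)) := by
  simp only [dphiQ]
  rw [integral_div, integral_sub hf (h1.const_mul _), integral_const_mul]
  rfl

theorem integral_dphiQ_self (hf : Integrable (opQ Q f) η)
    (h1 : Integrable (opQ Q (fun _ => (1 : ℝ))) η) (hη : measQ Q η (fun _ => (1 : ℝ)) ≠ 0) :
    ∫ x, dphiQ Q η f x ∂η = 0 := by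
  rw [integral_dphiQ hf h1, phiQ, div_mul_cancel₀ _ hη, sub_self, zero_div]

theorem phiQ_eq_add_mul_integral_dphiQ {ν : Measure S} (hη : measQ Q η (fun _ => (1 : ℝ)) ≠ 0)
    (hν : measQ Q ν (fun _ => (1 : ℝ)) ≠ 0) (hf : Integrable (opQ Q f) ν)
    (h1 : Integrable (opQ Q (fun _ => (1 : ℝ))) ν) :
    phiQ Q ν f
      = phiQ Q η f
        + measQ Q η (fun _ => (1 : ℝ)) / measQ Q ν (fun _ => (1 : ℝ)) * ∫ x, dphiQ Q η f x ∂ν := by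
  rw [integral_dphiQ hf h1, phiQ, phiQ]
  field_simp
  ring

theorem taylor_expansion_phi_general (Q : S → Measure S) (η ν : Measure S)
    (f : S → ℝ) (n : ℕ)
    (hη : 0 < measQ Q η (fun _ => (1 : ℝ))) (hν : 0 < measQ Q ν (fun _ => (1 : ℝ)))
    (hfη : Integrable (opQ Q f) η) (h1η : Integrable (opQ Q (fun _ => (1 : ℝ))) η)
    (hfν : Integrable (opQ Q f) ν) (h1ν : Integrable (opQ Q (fun _ => (1 : ℝ))) ν) :
    phiQ Q ν f
      = phiQ Q η f
        + (∑ k ∈ Finset.Icc 1 n,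
            (1 / (k.factorial : ℝ)) *
              ((-1 : ℝ) ^ (k - 1) * (k.factorial : ℝ)
                * ((∫ x, opQ Q (fun _ => (1 : ℝ)) x / measQ Q η (fun _ => (1 : ℝ)) ∂ν)
                    - ∫ x, opQ Q (fun _ => (1 : ℝ)) x / measQ Q η (fun _ => (1 : ℝ)) ∂η) ^ (k - 1)
                * ((∫ x, dphiQ Q η f x ∂ν) - ∫ x, dphiQ Q η f x ∂η)))
        + (1 / ((n + 1).factorial : ℝ)) *
            ((measQ Q η (fun _ => (1 : ℝ)) / measQ Q ν (fun _ => (1 : ℝ)))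
              * ((-1 : ℝ) ^ n * ((n + 1).factorial : ℝ)
                * ((∫ x, opQ Q (fun _ => (1 : ℝ)) x / measQ Q η (fun _ => (1 : ℝ)) ∂ν)
                    - ∫ x, opQ Q (fun _ => (1 : ℝ)) x / measQ Q η (fun _ => (1 : ℝ)) ∂η) ^ n
                * ((∫ x, dphiQ Q η f x ∂ν) - ∫ x, dphiQ Q η f x ∂η))) := by
  set A := measQ Q η (fun _ => (1 : ℝ))
  set B := measQ Q ν (fun _ => (1 : ℝ))
  have hinv : A / B = (1 + (B / A - 1))⁻¹ := by rw [add_sub_cancel, inv_div]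
  have hx : 1 + (B / A - 1) ≠ 0 := by rw [add_sub_cancel]; positivity
  rw [integral_opQ_one_div, integral_opQ_one_div, div_self hη.ne',
    integral_dphiQ_self hfη h1η hη.ne', sub_zero, add_assoc, hinv,
    ← inv_one_add_mul_eq_taylor hx, ← hinv]
  exact phiQ_eq_add_mul_integral_dphiQ hη.ne' hν.ne' hfν h1ν

/-- Taylor expansion with remainder for the normalized transformation `φ`.
The contraction of the `k`-th differential
`∂^k_ηφ(f) = (−1)^{k−1} k! [Q^η(1)^{⊗(k−1)} ⊗ ∂_ηφ(f)]` against
`(ν−η)^{⊗k}` equals `(−1)^{k−1} k! a^{k−1} b`, where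
`a = (ν−η)(Q^η(1))` and `b = (ν−η)(∂_ηφ(f))`; the remainder carries the extra
factor `ηQ^ν(1) = ηQ(1)/νQ(1)`. -/
theorem taylor_expansion_phi (Q : S → Measure S) (η ν : Measure S)
    [IsProbabilityMeasure η] [IsProbabilityMeasure ν] (f : S → ℝ) (n : ℕ) (hn : 1 ≤ n)
    (hη : 0 < measQ Q η (fun _ => (1 : ℝ))) (hν : 0 < measQ Q ν (fun _ => (1 : ℝ)))
    (hfη : Integrable (opQ Q f) η) (h1η : Integrable (opQ Q (fun _ => (1 : ℝ))) η)
    (hfν : Integrable (opQ Q f) ν) (h1ν : Integrable (opQ Q (fun _ => (1 : ℝ))) ν) :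
    phiQ Q ν f
      = phiQ Q η f
        + (∑ k ∈ Finset.Icc 1 n,
            (1 / (k.factorial : ℝ)) *
              ((-1 : ℝ) ^ (k - 1) * (k.factorial : ℝ)
                * ((∫ x, opQ Q (fun _ => (1 : ℝ)) x / measQ Q η (fun _ => (1 : ℝ)) ∂ν)
                    - ∫ x, opQ Q (fun _ => (1 : ℝ)) x / measQ Q η (fun _ => (1 : ℝ)) ∂η) ^ (k - 1)
                * ((∫ x, dphiQ Q η f x ∂ν) - ∫ x, dphiQ Q η f x ∂η)))
        + (1 / ((n + 1).factorial : ℝ)) *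
            ((measQ Q η (fun _ => (1 : ℝ)) / measQ Q ν (fun _ => (1 : ℝ)))
              * ((-1 : ℝ) ^ n * ((n + 1).factorial : ℝ)
                * ((∫ x, opQ Q (fun _ => (1 : ℝ)) x / measQ Q η (fun _ => (1 : ℝ)) ∂ν)
                    - ∫ x, opQ Q (fun _ => (1 : ℝ)) x / measQ Q η (fun _ => (1 : ℝ)) ∂η) ^ n
                * ((∫ x, dphiQ Q η f x ∂ν) - ∫ x, dphiQ Q η f x ∂η))) :=
  taylor_expansion_phi_general Q η ν f n hη hν hfη h1η hfν h1ν
end
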